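/- Let {M₁, M₂} be a two-outcome POVM in dimension d. Then for every unit vector φ ∈ ℂ^d there exists a valid decomposition K of {M₁,M₂} with objective ∑_j ⟪φ, (K j j)·φ⟫ ≥ 1 − (λmax(M₁) − λmin(M₁))/2, where λmin(M₁) and λmax(M₁) denote the smallest and largest eigenvalues of M₁. -/

import Mathlib

open Matrix ComplexOrder

noncomputable section

/-- `K` is a valid decomposition of the POVM `M`. -/
def IsDecomp {m d : ℕ} (M : Fin m → Matrix (Fin d) (Fin d) ℂ)
    (K : Fin m → Fin m → Matrix (Fin d) (Fin d) ℂ) : Prop :=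
  (∀ x j, (K x j).PosSemidef) ∧
  (∀ j, (d : ℂ) • ∑ x, K x j = (∑ x, (K x j).trace) • (1 : Matrix (Fin d) (Fin d) ℂ)) ∧
  (∀ x, ∑ j, K x j = M x)

/-- Eve's objective for the decomposition `K` and the state `φ`:
`∑_j ⟪φ, (K j j) φ⟫`. -/
def objective {m d : ℕ} (K : Fin m → Fin m → Matrix (Fin d) (Fin d) ℂ)
    (φ : Fin d → ℂ) : ℝ :=
  ∑ j, (star φ ⬝ᵥ (K j j).mulVec φ).re

/-!
Let `A = M 0` with extreme eigenvalues `a ≤ b`, so that `a • 1 ≤ A ≤ b • 1`, `0 ≤ a` and `b ≤ 1`.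
Split `A = ½(A + a) + ½(A - a)` and `1 - A = ½(b - A) + ½(2 - b - A)`. Every piece is positive
semidefinite, each column sums to a multiple of the identity (`(a + b)/2` and `1 - (a + b)/2`),
and the diagonal pieces add up to `(1 - (b - a)/2) • 1`, so the objective equals
`1 - (b - a)/2` for every unit vector `φ`.
-/

open scoped MatrixOrder

namespace Matrix.IsHermitian

variable {𝕜 n : Type*} [RCLike 𝕜] [Fintype n] [DecidableEq n] {A : Matrix n n 𝕜}

theorem le_smul_one_iff_eigenvalues_le (hA : A.IsHermitian) {c : ℝ} :
    A ≤ c • 1 ↔ ∀ i, hA.eigenvalues i ≤ c := by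
  rw [← Algebra.algebraMap_eq_smul_one, le_algebraMap_iff_spectrum_le hA.isSelfAdjoint,
    hA.spectrum_real_eq_range_eigenvalues, Set.forall_mem_range]

theorem smul_one_le_iff_le_eigenvalues (hA : A.IsHermitian) {c : ℝ} :
    c • 1 ≤ A ↔ ∀ i, c ≤ hA.eigenvalues i := by
  rw [← Algebra.algebraMap_eq_smul_one, algebraMap_le_iff_le_spectrum hA.isSelfAdjoint,
    hA.spectrum_real_eq_range_eigenvalues, Set.forall_mem_range]

theorem le_iSup_eigenvalues_smul_one (hA : A.IsHermitian) :
    A ≤ (⨆ i, hA.eigenvalues i) • 1 :=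
  hA.le_smul_one_iff_eigenvalues_le.2 fun i ↦ le_ciSup (Set.finite_range _).bddAbove i

theorem iInf_eigenvalues_smul_one_le (hA : A.IsHermitian) :
    (⨅ i, hA.eigenvalues i) • 1 ≤ A :=
  hA.smul_one_le_iff_le_eigenvalues.2 fun i ↦ ciInf_le (Set.finite_range _).bddBelow i

end Matrix.IsHermitian

section Decomposition

variable {m d : ℕ}

theorem objective_eq_of_sum_diag_eq_smul_one {K : Fin m → Fin m → Matrix (Fin d) (Fin d) ℂ}
    {c : ℝ} (hK : ∑ j, K j j = c • 1) {φ : Fin d → ℂ} (hφ : star φ ⬝ᵥ φ = 1) :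
    objective K φ = c := by
  rw [objective, ← Complex.re_sum]
  simp_rw [← dotProduct_sum, ← sum_mulVec, hK, smul_mulVec, one_mulVec, dotProduct_smul, hφ]
  simp

theorem isDecomp_of_nonneg_of_sum_eq_smul_one {M : Fin m → Matrix (Fin d) (Fin d) ℂ}
    {K : Fin m → Fin m → Matrix (Fin d) (Fin d) ℂ} (hK : ∀ x j, 0 ≤ K x j)
    (hcol : ∀ j, ∃ c : ℝ, ∑ x, K x j = c • 1) (hrow : ∀ x, ∑ j, K x j = M x) :
    IsDecomp M K := by
  refine ⟨fun x j ↦ (hK x j).posSemidef, fun j ↦ ?_, hrow⟩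
  obtain ⟨c, hc⟩ := hcol j
  rw [← trace_sum, hc, trace_smul, trace_one, Fintype.card_fin, smul_assoc, smul_comm]

def twoOutcomeDecomp (A : Matrix (Fin d) (Fin d) ℂ) (a b : ℝ) :
    Fin 2 → Fin 2 → Matrix (Fin d) (Fin d) ℂ :=
  ![![(1 / 2 : ℝ) • (A + a • 1), (1 / 2 : ℝ) • (A - a • 1)],
    ![(1 / 2 : ℝ) • (b • 1 - A), (1 / 2 : ℝ) • ((2 - b) • 1 - A)]]

theorem isDecomp_twoOutcomeDecomp {A : Matrix (Fin d) (Fin d) ℂ} {a b : ℝ} (ha : 0 ≤ a)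
    (hb : b ≤ 1) (haA : a • 1 ≤ A) (hAb : A ≤ b • 1) :
    IsDecomp ![A, 1 - A] (twoOutcomeDecomp A a b) := by
  have hone : (0 : Matrix (Fin d) (Fin d) ℂ) ≤ 1 := PosSemidef.one.nonneg
  have hA : 0 ≤ A := (smul_nonneg ha hone).trans haA
  have hA2b : A ≤ (2 - b) • 1 := hAb.trans (smul_le_smul_of_nonneg_right (by linarith) hone)
  have h_half : (0 : ℝ) ≤ 1 / 2 := by norm_num
  refine isDecomp_of_nonneg_of_sum_eq_smul_one
    (Fin.forall_fin_two.2 ⟨Fin.forall_fin_two.2 ⟨?_, ?_⟩, Fin.forall_fin_two.2 ⟨?_, ?_⟩⟩)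
    (Fin.forall_fin_two.2 ⟨⟨(a + b) / 2, ?_⟩, ⟨(2 - a - b) / 2, ?_⟩⟩)
    (Fin.forall_fin_two.2 ⟨?_, ?_⟩)
  · exact smul_nonneg h_half (add_nonneg hA (smul_nonneg ha hone))
  · exact smul_nonneg h_half (sub_nonneg.2 haA)
  · exact smul_nonneg h_half (sub_nonneg.2 hAb)
  · exact smul_nonneg h_half (sub_nonneg.2 hA2b)
  all_goals
    simp only [twoOutcomeDecomp, Fin.sum_univ_two, cons_val_zero, cons_val_one, cons_val_fin_one]
    module

theorem objective_twoOutcomeDecomp (A : Matrix (Fin d) (Fin d) ℂ) (a b : ℝ) {φ : Fin d → ℂ}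
    (hφ : star φ ⬝ᵥ φ = 1) : objective (twoOutcomeDecomp A a b) φ = 1 - (b - a) / 2 := by
  refine objective_eq_of_sum_diag_eq_smul_one ?_ hφ
  simp only [twoOutcomeDecomp, Fin.sum_univ_two, cons_val_zero, cons_val_one, cons_val_fin_one]
  module

end Decomposition

/-- Lower bound on the guessing probability of any two-outcome POVM in dimension `d`:
for every unit state `φ` there is a valid decomposition with objective at least
`1 − (λmax(M₁) − λmin(M₁))/2`. -/
theorem pguess_two_outcome_dim_d_lower_bound
    {d : ℕ}
    (M : Fin 2 → Matrix (Fin d) (Fin d) ℂ)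
    (hpsd : ∀ x, (M x).PosSemidef) (hsum : ∑ x, M x = 1)
    (φ : Fin d → ℂ) (hφ : star φ ⬝ᵥ φ = 1) :
    ∃ K : Fin 2 → Fin 2 → Matrix (Fin d) (Fin d) ℂ, IsDecomp M K ∧
      1 - ((⨆ i, (hpsd 0).isHermitian.eigenvalues i)
        - (⨅ i, (hpsd 0).isHermitian.eigenvalues i)) / 2 ≤ objective K φ := by
  have hA := (hpsd 0).isHermitian
  have hM1 : M 1 = 1 - M 0 := by
    rw [← hsum, Fin.sum_univ_two, add_sub_cancel_left]
  have hM : ![M 0, 1 - M 0] = M := by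
    ext1 x
    fin_cases x
    exacts [rfl, hM1.symm]
  have hA_le_one : ∀ i, hA.eigenvalues i ≤ 1 :=
    hA.le_smul_one_iff_eigenvalues_le.1 <| by
      simpa [hM1] using (hpsd 1).nonneg
  refine ⟨twoOutcomeDecomp (M 0) (⨅ i, hA.eigenvalues i) (⨆ i, hA.eigenvalues i), ?_,
    (objective_twoOutcomeDecomp _ _ _ hφ).ge⟩
  have hdecomp := isDecomp_twoOutcomeDecomp (Real.iInf_nonneg (hpsd 0).eigenvalues_nonneg)
    (Real.iSup_le hA_le_one zero_le_one) hA.iInf_eigenvalues_smul_one_le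
    hA.le_iSup_eigenvalues_smul_one
  rwa [hM] at hdecomp
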